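/- arXiv:math/0306363 — 3 statements merged into one kernel-verified Lean document; each statement's English description precedes it below -/
import Mathlib

section
/- The explicit function z₁(x) = [1 + c_N |x|^{2(1+a-b)(N-2-2a)/(N-2(1+a-b))}]^{-(N-2(1+a-b))/(2(1+a-b))}, where c_N = (N-2(1+a-b))/(N(N-2-2a)²), is a positive C² solution on ℝ^N \ {0} of -div(|x|^{-2a}∇u) = |x|^{-bp} u^{p-1} with p = 2N/(N-2(1+a-b)). -/
/-
The function z₁ is a radial bubble, z₁(x) = g(|x|) with g(r) = (1 + c r^A)^(-B).
If g'(r) = r^(2a+1) H(r), then |x|^(-2a) ∇z₁ = H(|x|) x, and the divergence of such a field is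
N H(r) + r H'(r). For our g, H(r) = -BcA r^(A-2a-2) (1 + c r^A)^(-B-1), and the exponent
relations N + (A - 2a - 2) = (B+1) A and BcA (B+1) A = 1 (the latter is what fixes c_N) collapse
N H + r H' to -r^(A-2a-2) (1 + c r^A)^(-B-2). Finally A - 2a - 2 = -bp and -B - 2 = -B (p - 1),
which gives the right-hand side |x|^(-bp) z₁^(p-1).
-/

open Real

/-- Divergence of a vector field on `ℝ^N`: sum of partial derivatives of components. -/
noncomputable def vdiv {N : ℕ} (F : EuclideanSpace ℝ (Fin N) → EuclideanSpace ℝ (Fin N))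
    (x : EuclideanSpace ℝ (Fin N)) : ℝ :=
  ∑ i, fderiv ℝ F x (EuclideanSpace.single i 1) i

/-- The weighted operator `div(|x|^{-2c} ∇u)`. -/
noncomputable def divWeight {N : ℕ} (c : ℝ) (u : EuclideanSpace ℝ (Fin N) → ℝ)
    (x : EuclideanSpace ℝ (Fin N)) : ℝ :=
  vdiv (fun y => ‖y‖ ^ (-(2 * c)) • gradient u y) x

section Radial

variable {E : Type*} [NormedAddCommGroup E] [InnerProductSpace ℝ E] {x : E}

theorem hasFDerivAt_norm_of_ne_zero (hx : x ≠ 0) :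
    HasFDerivAt (fun y : E => ‖y‖) (‖x‖⁻¹ • innerSL ℝ x) x := by
  have h := (hasStrictFDerivAt_norm_sq x).hasFDerivAt.sqrt (by positivity)
  simp only [Real.sqrt_sq (norm_nonneg _)] at h
  convert h using 1
  ext v
  simp only [FunLike.coe_smul, Pi.smul_apply, smul_eq_mul, two_smul, FunLike.coe_add, Pi.add_apply]
  field_simp
  ring

theorem HasDerivAt.hasFDerivAt_comp_norm {g : ℝ → ℝ} {g' : ℝ} (hx : x ≠ 0)
    (hg : HasDerivAt g g' ‖x‖) :
    HasFDerivAt (fun y : E => g ‖y‖) ((g' * ‖x‖⁻¹) • innerSL ℝ x) x := by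
  rw [← smul_smul]
  exact hg.comp_hasFDerivAt x (hasFDerivAt_norm_of_ne_zero hx)

theorem HasDerivAt.gradient_comp_norm [CompleteSpace E] {g : ℝ → ℝ} {g' : ℝ} (hx : x ≠ 0)
    (hg : HasDerivAt g g' ‖x‖) :
    gradient (fun y : E => g ‖y‖) x = (g' * ‖x‖⁻¹) • x := by
  refine HasGradientAt.gradient ?_
  rw [hasGradientAt_iff_hasFDerivAt]
  convert hg.hasFDerivAt_comp_norm hx using 1 <;>
  · ext v
    simp [InnerProductSpace.toDual_apply_apply]

end Radial

theorem vdiv_smul_self_of_eventuallyEq {N : ℕ} {H : ℝ → ℝ} {H' : ℝ}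
    {F : EuclideanSpace ℝ (Fin N) → EuclideanSpace ℝ (Fin N)} {x : EuclideanSpace ℝ (Fin N)}
    (hx : x ≠ 0) (hF : F =ᶠ[nhds x] fun y => H ‖y‖ • y) (hH : HasDerivAt H H' ‖x‖) :
    vdiv F x = N * H ‖x‖ + H' * ‖x‖ := by
  have hfd : fderiv ℝ F x = H ‖x‖ • ContinuousLinearMap.id ℝ _ +
      ((H' * ‖x‖⁻¹) • innerSL ℝ x).smulRight x := by
    have hL : HasFDerivAt (fun y => H ‖y‖ • y) (H ‖x‖ • ContinuousLinearMap.id ℝ _ +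
        ((H' * ‖x‖⁻¹) • innerSL ℝ x).smulRight x) x :=
      (hH.hasFDerivAt_comp_norm hx).smul (hasFDerivAt_id x)
    rw [hF.fderiv_eq, hL.fderiv]
  have hentry (i : Fin N) : fderiv ℝ F x (EuclideanSpace.single i 1) i
      = H ‖x‖ + H' * ‖x‖⁻¹ * x i ^ 2 := by
    simp only [hfd, add_apply, smul_apply, ContinuousLinearMap.id_apply,
      ContinuousLinearMap.smulRight_apply, coe_innerSL_apply, EuclideanSpace.inner_single_right,
      conj_trivial, smul_eq_mul, PiLp.add_apply, PiLp.smul_apply, PiLp.single_eq_same]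
    ring
  simp only [vdiv, hentry, Finset.sum_add_distrib, Finset.sum_const, ← Finset.mul_sum,
    ← EuclideanSpace.real_norm_sq_eq, Finset.card_univ, Fintype.card_fin, nsmul_eq_mul]
  field_simp

theorem divWeight_comp_norm {N : ℕ} {c : ℝ} {g H : ℝ → ℝ} {H' : ℝ}
    {x : EuclideanSpace ℝ (Fin N)} (hx : x ≠ 0)
    (hg : ∀ r, 0 < r → HasDerivAt g (r ^ (2 * c + 1) * H r) r) (hH : HasDerivAt H H' ‖x‖) :
    divWeight c (fun y => g ‖y‖) x = N * H ‖x‖ + H' * ‖x‖ := by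
  refine vdiv_smul_self_of_eventuallyEq hx ?_ hH
  filter_upwards [isOpen_compl_singleton.mem_nhds hx] with y (hy : y ≠ 0)
  have hr : 0 < ‖y‖ := norm_pos_iff.mpr hy
  rw [(hg _ hr).gradient_comp_norm hy, smul_smul]
  congr 1
  have : ‖y‖ ^ (-(2 * c)) * ‖y‖ ^ (2 * c + 1) = ‖y‖ := by
    rw [← rpow_add hr]; norm_num
  field_simp
  linear_combination H ‖y‖ * this

section Bubble

variable {A B c : ℝ}

theorem hasDerivAt_one_add_mul_rpow_rpow {r : ℝ} (hc : 0 ≤ c) (hr : 0 < r) (e : ℝ) :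
    HasDerivAt (fun s => (1 + c * s ^ A) ^ e)
      (e * c * A * r ^ (A - 1) * (1 + c * r ^ A) ^ (e - 1)) r := by
  have hw : 0 < 1 + c * r ^ A := by positivity
  have := (((hasDerivAt_rpow_const (p := A) (Or.inl hr.ne')).const_mul c).const_add 1).rpow_const
    (p := e) (Or.inl hw.ne')
  exact this.congr_deriv (by ring)

theorem hasDerivAt_bubble_flux {N α : ℝ} {r : ℝ} (hc : 0 ≤ c) (hr : 0 < r)
    (hα : N + α = (B + 1) * A) (hk : B * c * A * ((B + 1) * A) = 1) :
    HasDerivAt (fun s => -(B * c * A) * s ^ α * (1 + c * s ^ A) ^ (-B - 1))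
      ((-(r ^ α * (1 + c * r ^ A) ^ (-B - 2)) -
        N * (-(B * c * A) * r ^ α * (1 + c * r ^ A) ^ (-B - 1))) / r) r := by
  have hw : 0 < 1 + c * r ^ A := by positivity
  have hd := ((hasDerivAt_rpow_const (p := α) (Or.inl hr.ne')).const_mul (-(B * c * A))).mul
    (hasDerivAt_one_add_mul_rpow_rpow (A := A) hc hr (-B - 1))
  refine hd.congr_deriv ?_
  have hα1 : r ^ (α - 1) = r ^ α / r := rpow_sub_one hr.ne' α
  have hA1 : r ^ (A - 1) = r ^ A / r := rpow_sub_one hr.ne' A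
  have hB1 : (1 + c * r ^ A) ^ (-B - 1) = (1 + c * r ^ A) ^ (-B - 2) * (1 + c * r ^ A) := by
    rw [← rpow_add_one hw.ne']; ring_nf
  rw [hα1, hA1, hB1, show -B - 1 - 1 = -B - 2 by ring]
  field_simp
  linear_combination -(B * c * A * (1 + c * r ^ A)) * hα - hk

theorem divWeight_bubble {N : ℕ} {a : ℝ} {x : EuclideanSpace ℝ (Fin N)} (hx : x ≠ 0)
    (hc : 0 ≤ c) (hα : N + (A - 2 * a - 2) = (B + 1) * A)
    (hk : B * c * A * ((B + 1) * A) = 1) :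
    -divWeight a (fun y => (1 + c * ‖y‖ ^ A) ^ (-B)) x =
      ‖x‖ ^ (A - 2 * a - 2) * (1 + c * ‖x‖ ^ A) ^ (-B - 2) := by
  have hr : 0 < ‖x‖ := norm_pos_iff.mpr hx
  have hg (r : ℝ) (hr : 0 < r) : HasDerivAt (fun s => (1 + c * s ^ A) ^ (-B))
      (r ^ (2 * a + 1) * (-(B * c * A) * r ^ (A - 2 * a - 2) * (1 + c * r ^ A) ^ (-B - 1))) r := by
    refine (hasDerivAt_one_add_mul_rpow_rpow hc hr (-B)).congr_deriv ?_
    have : r ^ (2 * a + 1) * r ^ (A - 2 * a - 2) = r ^ (A - 1) := by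
      rw [← rpow_add hr]; ring_nf
    linear_combination (B * c * A * (1 + c * r ^ A) ^ (-B - 1)) * this
  rw [divWeight_comp_norm hx hg (hasDerivAt_bubble_flux hc hr hα hk)]
  field_simp
  ring

end Bubble

theorem contDiffOn_one_add_mul_norm_rpow_rpow {E : Type*} [NormedAddCommGroup E]
    [InnerProductSpace ℝ E] {A c : ℝ} (hc : 0 ≤ c) (e : ℝ) {n : WithTop ℕ∞} :
    ContDiffOn ℝ n (fun x : E => (1 + c * ‖x‖ ^ A) ^ e) {x | x ≠ 0} := by
  intro x (hx : x ≠ 0)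
  have hr : 0 < ‖x‖ := norm_pos_iff.mpr hx
  have hprofile : ContDiffAt ℝ n (fun r : ℝ => (1 + c * r ^ A) ^ e) ‖x‖ :=
    ContDiffAt.rpow_const_of_ne
      (contDiffAt_const.add (contDiffAt_const.mul (contDiffAt_rpow_const_of_ne hr.ne')))
      (by positivity)
  exact (hprofile.comp x (contDiffAt_norm ℝ hx)).contDiffWithinAt

theorem stmt7_general (N : ℕ) (hN : 3 ≤ N) (a b p cN : ℝ)
    (ha : a < ((N : ℝ) - 2) / 2) (hb1 : a ≤ b) (hb2 : b < a + 1)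
    (hp : p = 2 * (N : ℝ) / ((N : ℝ) - 2 * (1 + a - b)))
    (hcN : cN = ((N : ℝ) - 2 * (1 + a - b)) / ((N : ℝ) * ((N : ℝ) - 2 - 2 * a) ^ 2))
    (z₁ : EuclideanSpace ℝ (Fin N) → ℝ)
    (hz₁ : ∀ x, z₁ x =
      (1 + cN * ‖x‖ ^ (2 * (1 + a - b) * ((N : ℝ) - 2 - 2 * a) / ((N : ℝ) - 2 * (1 + a - b))))
        ^ (-(((N : ℝ) - 2 * (1 + a - b)) / (2 * (1 + a - b))))) :
    (∀ x : EuclideanSpace ℝ (Fin N), x ≠ 0 → 0 < z₁ x) ∧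
    ContDiffOn ℝ 2 z₁ {x | x ≠ 0} ∧
    (∀ x : EuclideanSpace ℝ (Fin N), x ≠ 0 →
      -divWeight a z₁ x = ‖x‖ ^ (-(b * p)) * z₁ x ^ (p - 1)) := by
  set A := 2 * (1 + a - b) * ((N : ℝ) - 2 - 2 * a) / ((N : ℝ) - 2 * (1 + a - b)) with hA
  set B := ((N : ℝ) - 2 * (1 + a - b)) / (2 * (1 + a - b)) with hB
  obtain rfl : z₁ = fun x => (1 + cN * ‖x‖ ^ A) ^ (-B) := funext hz₁
  have hN3 : (3 : ℝ) ≤ N := by exact_mod_cast hN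
  have hθ : 0 < 1 + a - b := by linarith
  have hδ : 0 < (N : ℝ) - 2 - 2 * a := by linarith
  have hm : 0 < (N : ℝ) - 2 * (1 + a - b) := by linarith
  have hc : 0 ≤ cN := by rw [hcN]; positivity
  have hbp : -(b * p) = A - 2 * a - 2 := by rw [hp, hA]; field_simp; ring
  have hBp : -B * (p - 1) = -B - 2 := by rw [hp, hB]; field_simp; ring
  have hα : N + (A - 2 * a - 2) = (B + 1) * A := by rw [hA, hB]; field_simp; ring
  have hk : B * cN * A * ((B + 1) * A) = 1 := by rw [hA, hB, hcN]; field_simp; ring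
  refine ⟨fun x _ => by positivity, contDiffOn_one_add_mul_norm_rpow_rpow hc _, fun x hx => ?_⟩
  rw [divWeight_bubble hx hc hα hk, hbp, ← rpow_mul (by positivity), hBp]

theorem stmt7 (N : ℕ) (hN : 3 ≤ N) (a b p cN : ℝ)
    (ha0 : 0 ≤ a) (ha : a < ((N : ℝ) - 2) / 2) (hb1 : a ≤ b) (hb2 : b < a + 1)
    (hp : p = 2 * (N : ℝ) / ((N : ℝ) - 2 * (1 + a - b)))
    (hcN : cN = ((N : ℝ) - 2 * (1 + a - b)) / ((N : ℝ) * ((N : ℝ) - 2 - 2 * a) ^ 2))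
    (z₁ : EuclideanSpace ℝ (Fin N) → ℝ)
    (hz₁ : ∀ x, z₁ x =
      (1 + cN * ‖x‖ ^ (2 * (1 + a - b) * ((N : ℝ) - 2 - 2 * a) / ((N : ℝ) - 2 * (1 + a - b))))
        ^ (-(((N : ℝ) - 2 * (1 + a - b)) / (2 * (1 + a - b))))) :
    (∀ x : EuclideanSpace ℝ (Fin N), x ≠ 0 → 0 < z₁ x) ∧
    ContDiffOn ℝ 2 z₁ {x | x ≠ 0} ∧
    (∀ x : EuclideanSpace ℝ (Fin N), x ≠ 0 →
      -divWeight a z₁ x = ‖x‖ ^ (-(b * p)) * z₁ x ^ (p - 1)) :=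
  stmt7_general N hN a b p cN ha hb1 hb2 hp hcN z₁ hz₁
end

section
/- For u(x) = |x|^{2+2a-N} + A with A > 0, the limit as σ → 0 of ∫_{∂B_σ(0)} B(σ,x,u,∇u) equals -((N-2-2a)²/2) A |S^{N-1}|, where |S^{N-1}| is the surface measure of the unit sphere. -/
/-! On the sphere `‖x‖ = σ` the gradient of `u` is radial, `∇u = p σ^(p-1) ν` with
`p = 2 + 2a - N`, so `B` is constant there. Because the coefficient `(N-2-2a)/2` equals `-p/2`,
the terms of order `σ^(2p-1)` cancel and only the cross term with `A` survives:
`B = -(p²/2) A σ^(1-N)`. Hence `σ^(N-1) ∫_{S^(N-1)} B` does not depend on `σ` at all. -/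

open Real MeasureTheory RealInnerProductSpace Filter

section NormRpow

variable {E : Type*} [NormedAddCommGroup E] [InnerProductSpace ℝ E]

theorem hasFDerivAt_norm_rpow_of_ne_zero {x : E} (hx : x ≠ 0) (p : ℝ) :
    HasFDerivAt (fun y : E ↦ ‖y‖ ^ p) ((p * ‖x‖ ^ (p - 2)) • innerSL ℝ x) x := by
  apply HasStrictFDerivAt.hasFDerivAt
  convert! (hasStrictFDerivAt_norm_sq x).rpow_const (p := p / 2) (by simp [hx]) using 0
  simp_rw [← Real.rpow_natCast_mul (norm_nonneg _), ← Nat.cast_smul_eq_nsmul ℝ, smul_smul]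
  ring_nf

theorem hasGradientAt_norm_rpow_add_const [CompleteSpace E] {x : E} (hx : x ≠ 0) (p A : ℝ) :
    HasGradientAt (fun y : E ↦ ‖y‖ ^ p + A) ((p * ‖x‖ ^ (p - 2)) • x) x := by
  rw [hasGradientAt_iff_hasFDerivAt, map_smul]
  exact (hasFDerivAt_norm_rpow_of_ne_zero hx p).add_const A

theorem gradient_norm_rpow_add_const_smul [CompleteSpace E] {ω : E} (hω : ‖ω‖ = 1) {σ : ℝ}
    (hσ : 0 < σ) (p A : ℝ) :
    gradient (fun y : E ↦ ‖y‖ ^ p + A) (σ • ω) = (p * σ ^ (p - 1)) • ω := by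
  have hx : σ • ω ≠ 0 := smul_ne_zero hσ.ne' (norm_ne_zero_iff.mp (by simp [hω]))
  have hnorm : ‖σ • ω‖ = σ := by rw [norm_smul, hω, norm_of_nonneg hσ.le, mul_one]
  rw [(hasGradientAt_norm_rpow_add_const hx p A).gradient, hnorm, smul_smul,
    mul_assoc, ← rpow_add_one hσ.ne']
  ring_nf

end NormRpow

theorem pohozaev_radial_identity (n a A : ℝ) {σ : ℝ} (hσ : 0 < σ) :
    (n - 2 - 2 * a) / 2 * σ ^ (-(2 * a)) * (σ ^ (2 + 2 * a - n) + A)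
        * ((2 + 2 * a - n) * σ ^ (2 + 2 * a - n - 1))
      - σ / 2 * σ ^ (-(2 * a)) * ((2 + 2 * a - n) * σ ^ (2 + 2 * a - n - 1)) ^ 2
      + σ * σ ^ (-(2 * a)) * ((2 + 2 * a - n) * σ ^ (2 + 2 * a - n - 1)) ^ 2
      = -((n - 2 - 2 * a) ^ 2 / 2) * A * σ ^ (1 - n) := by
  have h1 : σ ^ (2 + 2 * a - n - 1) = σ ^ (1 - n) * σ ^ (2 * a) := by
    rw [← rpow_add hσ]; ring_nf
  have h2 : σ ^ (2 + 2 * a - n) = σ * (σ ^ (1 - n) * σ ^ (2 * a)) := by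
    rw [← h1, rpow_sub_one hσ.ne']; field_simp
  have h3 : σ ^ (-(2 * a)) * σ ^ (2 * a) = 1 := by
    rw [← rpow_add hσ]; simp
  rw [h2, h1]
  linear_combination (-((n - 2 - 2 * a) ^ 2 / 2) * A * σ ^ (1 - n)) * h3

theorem stmt12_general (N : ℕ) (a A : ℝ)
    (u : EuclideanSpace ℝ (Fin N) → ℝ)
    (hu : ∀ x, u x = ‖x‖ ^ (2 + 2 * a - (N : ℝ)) + A)
    (B : ℝ → EuclideanSpace ℝ (Fin N) → ℝ)
    (hB : ∀ σ x, B σ x =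
      (((N : ℝ) - 2 - 2 * a) / 2) * ‖x‖ ^ (-(2 * a)) * u x * ⟪gradient u x, σ⁻¹ • x⟫
        - (σ / 2) * ‖x‖ ^ (-(2 * a)) * ‖gradient u x‖ ^ 2
        + σ * ‖x‖ ^ (-(2 * a)) * ⟪gradient u x, σ⁻¹ • x⟫ ^ 2) :
    Tendsto (fun σ : ℝ => σ ^ ((N : ℝ) - 1) *
        ∫ ω : Metric.sphere (0 : EuclideanSpace ℝ (Fin N)) 1,
          B σ (σ • (ω : EuclideanSpace ℝ (Fin N)))
          ∂((volume : Measure (EuclideanSpace ℝ (Fin N))).toSphere))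
      (nhdsWithin 0 (Set.Ioi 0))
      (nhds (-((((N : ℝ) - 2 - 2 * a) ^ 2) / 2) * A *
        (((volume : Measure (EuclideanSpace ℝ (Fin N))).toSphere) Set.univ).toReal)) := by
  have hu' : u = fun y ↦ ‖y‖ ^ (2 + 2 * a - (N : ℝ)) + A := funext hu
  have hB_sphere : ∀ σ > 0, ∀ ω : Metric.sphere (0 : EuclideanSpace ℝ (Fin N)) 1,
      B σ (σ • (ω : EuclideanSpace ℝ (Fin N))) =
        -((((N : ℝ) - 2 - 2 * a) ^ 2) / 2) * A * σ ^ (1 - (N : ℝ)) := by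
    intro σ hσ ω
    have hω : ‖(ω : EuclideanSpace ℝ (Fin N))‖ = 1 := by simp
    rw [hB, hu, hu', gradient_norm_rpow_add_const_smul hω hσ, smul_smul, inv_mul_cancel₀ hσ.ne',
      one_smul, real_inner_smul_left, real_inner_self_eq_norm_sq, norm_smul, norm_smul, hω,
      norm_of_nonneg hσ.le, norm_eq_abs]
    simp only [mul_one, one_pow, sq_abs]
    exact pohozaev_radial_identity N a A hσ
  refine tendsto_const_nhds.congr' ?_
  filter_upwards [self_mem_nhdsWithin] with σ (hσ : 0 < σ)
  simp only [hB_sphere σ hσ, integral_const, smul_eq_mul, measureReal_def]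
  have hσ_cancel : σ ^ ((N : ℝ) - 1) * σ ^ (1 - (N : ℝ)) = 1 := by
    rw [← rpow_add hσ]; simp
  linear_combination ((((N : ℝ) - 2 - 2 * a) ^ 2 / 2) * A *
    ((volume : Measure (EuclideanSpace ℝ (Fin N))).toSphere Set.univ).toReal) * hσ_cancel

theorem stmt12 (N : ℕ) (hN : 3 ≤ N) (a A : ℝ) (ha : a < ((N : ℝ) - 2) / 2) (hA : 0 < A)
    (u : EuclideanSpace ℝ (Fin N) → ℝ)
    (hu : ∀ x, u x = ‖x‖ ^ (2 + 2 * a - (N : ℝ)) + A)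
    (B : ℝ → EuclideanSpace ℝ (Fin N) → ℝ)
    (hB : ∀ σ x, B σ x =
      (((N : ℝ) - 2 - 2 * a) / 2) * ‖x‖ ^ (-(2 * a)) * u x * ⟪gradient u x, σ⁻¹ • x⟫
        - (σ / 2) * ‖x‖ ^ (-(2 * a)) * ‖gradient u x‖ ^ 2
        + σ * ‖x‖ ^ (-(2 * a)) * ⟪gradient u x, σ⁻¹ • x⟫ ^ 2) :
    Tendsto (fun σ : ℝ => σ ^ ((N : ℝ) - 1) *
        ∫ ω : Metric.sphere (0 : EuclideanSpace ℝ (Fin N)) 1,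
          B σ (σ • (ω : EuclideanSpace ℝ (Fin N)))
          ∂((volume : Measure (EuclideanSpace ℝ (Fin N))).toSphere))
      (nhdsWithin 0 (Set.Ioi 0))
      (nhds (-((((N : ℝ) - 2 - 2 * a) ^ 2) / 2) * A *
        (((volume : Measure (EuclideanSpace ℝ (Fin N))).toSphere) Set.univ).toReal)) :=
  stmt12_general N a A u hu B hB
end

section
/- For 0 < r ≤ 2 and any z ∈ ℝ^N, with μ_z(B_s(x)) = ∫_{B_s(x)} |y-z|^{-2a} dy, the function M(x,t) = ∫_t^8 s/μ_z(B_s(x)) ds satisfies, for |x-y| > |x-z|/2, the bound M(x,|x-y|) ≤ c |x-y|^{-N+2a+2} for a constant c depending only on N and a. -/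
open Real MeasureTheory Set

/-!
Once `|x - z| < 2|x - y| < 2s`, the ball `B_s(x)` has weighted measure at least
`c' s^N (2s)^{-2a}`, so the integrand `s / μ_z(B_s(x))` is at most a constant times
`s^{1 + 2a - N}`. Since `1 + 2a - N < -1`, the tail integral of this power over `(|x - y|, ∞)`
converges and equals a constant times `|x - y|^{2 + 2a - N}`.
-/

lemma div_le_rpow_of_mul_rpow_max_le {c m s d b n : ℝ} (hc : 0 < c) (hb : 0 ≤ b) (hs : 0 < s)
    (hd : d ≤ 2 * s) (hm : c * s ^ n * max s d ^ (-b) ≤ m) :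
    s / m ≤ 2 ^ b / c * s ^ (1 + b - n) := by
  have hmax : (2 * s) ^ (-b) ≤ max s d ^ (-b) :=
    rpow_le_rpow_of_nonpos (lt_max_of_lt_left hs) (max_le (by linarith) hd) (by linarith)
  have hm' : c * s ^ n * (2 * s) ^ (-b) ≤ m :=
    le_trans (by gcongr) hm
  calc s / m ≤ s / (c * s ^ n * (2 * s) ^ (-b)) := by gcongr
    _ = 2 ^ b / c * s ^ (1 + b - n) := by
      rw [mul_rpow zero_le_two hs.le, rpow_sub hs, rpow_add hs, rpow_one, rpow_neg zero_le_two,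
        rpow_neg hs.le]
      field_simp

lemma setIntegral_Ioc_le_of_le_rpow {f : ℝ → ℝ} {t T K p : ℝ} (ht : 0 < t) (hp : p < -1)
    (hK : 0 ≤ K) (hf₀ : ∀ s ∈ Ioc t T, 0 ≤ f s) (hf : ∀ s ∈ Ioc t T, f s ≤ K * s ^ p) :
    ∫ s in Ioc t T, f s ≤ K * (-t ^ (p + 1) / (p + 1)) := by
  have hint : IntegrableOn (fun s ↦ K * s ^ p) (Ioi t) :=
    (integrableOn_Ioi_rpow_of_lt hp ht).const_mul K
  calc ∫ s in Ioc t T, f s ≤ ∫ s in Ioc t T, K * s ^ p :=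
        integral_mono_of_nonneg ((ae_restrict_iff' measurableSet_Ioc).2 (.of_forall hf₀))
          (hint.mono_set Ioc_subset_Ioi_self) ((ae_restrict_iff' measurableSet_Ioc).2 (.of_forall hf))
    _ ≤ ∫ s in Ioi t, K * s ^ p :=
        setIntegral_mono_set hint
          ((ae_restrict_iff' measurableSet_Ioi).2 (.of_forall fun s hs ↦
            mul_nonneg hK (rpow_nonneg (ht.trans hs).le p)))
          Ioc_subset_Ioi_self.eventuallyLE
    _ = K * (-t ^ (p + 1) / (p + 1)) := by
        rw [integral_const_mul, integral_Ioi_rpow_of_lt hp ht]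

theorem stmt19_general (N : ℕ) (a : ℝ) (ha0 : 0 ≤ a) (ha : a < ((N : ℝ) - 2) / 2)
    (c' : ℝ) (hc' : 0 < c')
    (hlow : ∀ (x z : EuclideanSpace ℝ (Fin N)) (s : ℝ), 0 < s → s ≤ 8 →
      c' * s ^ (N : ℝ) * max s ‖x - z‖ ^ (-(2 * a))
        ≤ ∫ w in Metric.ball x s, ‖w - z‖ ^ (-(2 * a))) :
    ∃ c > 0, ∀ (z x y : EuclideanSpace ℝ (Fin N)),
      x ∈ Metric.closedBall (0 : EuclideanSpace ℝ (Fin N)) 2 → x ≠ y →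
      ‖x - z‖ / 2 < ‖x - y‖ →
      (∫ s in Set.Ioc ‖x - y‖ 8,
          s / ∫ w in Metric.ball x s, ‖w - z‖ ^ (-(2 * a)))
        ≤ c * ‖x - y‖ ^ (-(N : ℝ) + 2 * a + 2) := by
  have hgap : 0 < (N : ℝ) - 2 - 2 * a := by linarith
  refine ⟨2 ^ (2 * a) / c' / ((N : ℝ) - 2 - 2 * a), by positivity, ?_⟩
  intro z x y _ _ hxz
  have ht : 0 < ‖x - y‖ := (by positivity : 0 ≤ ‖x - z‖ / 2).trans_lt hxz
  have hbound := setIntegral_Ioc_le_of_le_rpow (f := fun s ↦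
      s / ∫ w in Metric.ball x s, ‖w - z‖ ^ (-(2 * a))) (T := 8) ht
    (p := 1 + 2 * a - N) (by linarith) (by positivity)
    (fun s hs ↦ div_nonneg (ht.trans hs.1).le (integral_nonneg fun w ↦ by positivity))
    (fun s hs ↦ div_le_rpow_of_mul_rpow_max_le hc' (by positivity) (ht.trans hs.1)
      (by linarith [hs.1]) (hlow x z s (ht.trans hs.1) hs.2))
  refine hbound.trans_eq ?_
  rw [show 1 + 2 * a - (N : ℝ) + 1 = -((N : ℝ) - 2 - 2 * a) by ring, neg_div_neg_eq,
    show -((N : ℝ) - 2 - 2 * a) = -(N : ℝ) + 2 * a + 2 by ring]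
  ring

theorem stmt19 (N : ℕ) (hN : 3 ≤ N) (a : ℝ) (ha0 : 0 ≤ a) (ha : a < ((N : ℝ) - 2) / 2)
    (c' : ℝ) (hc' : 0 < c')
    (hlow : ∀ (x z : EuclideanSpace ℝ (Fin N)) (s : ℝ), 0 < s → s ≤ 8 →
      c' * s ^ (N : ℝ) * max s ‖x - z‖ ^ (-(2 * a))
        ≤ ∫ w in Metric.ball x s, ‖w - z‖ ^ (-(2 * a))) :
    ∃ c > 0, ∀ (z x y : EuclideanSpace ℝ (Fin N)),
      x ∈ Metric.closedBall (0 : EuclideanSpace ℝ (Fin N)) 2 → x ≠ y →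
      ‖x - z‖ / 2 < ‖x - y‖ →
      (∫ s in Set.Ioc ‖x - y‖ 8,
          s / ∫ w in Metric.ball x s, ‖w - z‖ ^ (-(2 * a)))
        ≤ c * ‖x - y‖ ^ (-(N : ℝ) + 2 * a + 2) :=
  stmt19_general N a ha0 ha c' hc' hlow
end
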